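/- Under the setup M = A Gᵀ (rank r factors) and S with κ = σ_min(S|_{Col(G)}) > 0, setting δ = σ_r(M), δ' = σ_r(M Sᵀ), and δ_min = min(δ, δ'), one has δ_min ≥ min(1, κ) · σ_r(A) · σ_r(G). -/

import Mathlib

/-!
For `w = G u ∈ Col(G)` one has `‖w‖² = ⟪Gᵀ w, u⟫ ≤ ‖Gᵀ w‖ ‖u‖` and `σ_r(G) ‖u‖ ≤ ‖w‖`, so `Gᵀ`
stretches `Col(G)` by at least `σ_r(G)` and `M = A Gᵀ` stretches it by at least
`σ_r(A) σ_r(G)`; since `Col(G)` has dimension `r`, this bounds `δ`. As `M Sᵀ = A (S G)ᵀ` and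
`‖S G u‖ ≥ κ σ_r(G) ‖u‖`, the same argument with `S G` in place of `G` bounds `δ'` on
`Col(S G) = S Col(G)`, which still has dimension `r` because `S` is injective on `Col(G)`.
-/

open Matrix

noncomputable def opNorm {m n : ℕ} (A : Matrix (Fin m) (Fin n) ℝ) : ℝ :=
  ‖(Matrix.toEuclideanLin A).toContinuousLinearMap‖

noncomputable def colSpace {m n : ℕ} (A : Matrix (Fin m) (Fin n) ℝ) :
    Submodule ℝ (EuclideanSpace ℝ (Fin m)) :=
  LinearMap.range (Matrix.toEuclideanLin A)

noncomputable def rowSpace {m n : ℕ} (A : Matrix (Fin m) (Fin n) ℝ) :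
    Submodule ℝ (EuclideanSpace ℝ (Fin n)) :=
  colSpace Aᵀ

noncomputable def projOp {n : ℕ} (U : Submodule ℝ (EuclideanSpace ℝ (Fin n))) :
    EuclideanSpace ℝ (Fin n) →L[ℝ] EuclideanSpace ℝ (Fin n) :=
  U.subtypeL.comp (U.orthogonalProjection)

noncomputable def subDist {n : ℕ} (U V : Submodule ℝ (EuclideanSpace ℝ (Fin n))) : ℝ :=
  ‖projOp U - projOp V‖

noncomputable def sval {m n : ℕ} (k : ℕ) (A : Matrix (Fin m) (Fin n) ℝ) : ℝ :=
  sSup {c : ℝ | ∃ V : Submodule ℝ (EuclideanSpace ℝ (Fin n)),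
    Module.finrank ℝ V = k ∧ ∀ v ∈ V, c * ‖v‖ ≤ ‖Matrix.toEuclideanLin A v‖}

noncomputable def frobNorm {m n : ℕ} (A : Matrix (Fin m) (Fin n) ℝ) : ℝ :=
  Real.sqrt (∑ i, ∑ j, (A i j) ^ 2)

open Module

lemma sInf_unit_mul_norm_le {E F : Type*} [NormedAddCommGroup E] [NormedSpace ℝ E]
    [SeminormedAddCommGroup F] [NormedSpace ℝ F] (f : E →ₗ[ℝ] F) (U : Submodule ℝ E) {w : E}
    (hw : w ∈ U) : sInf {t : ℝ | ∃ v ∈ U, ‖v‖ = 1 ∧ t = ‖f v‖} * ‖w‖ ≤ ‖f w‖ := by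
  rcases eq_or_ne w 0 with rfl | hw0
  · simp
  have hw0 := norm_pos_iff.mpr hw0
  have hunit : ‖‖w‖⁻¹ • w‖ = 1 := by
    rw [norm_smul, norm_inv, norm_norm, inv_mul_cancel₀ hw0.ne']
  have hle := csInf_le (s := {t : ℝ | ∃ v ∈ U, ‖v‖ = 1 ∧ t = ‖f v‖})
    ⟨0, by rintro t ⟨v, -, -, rfl⟩; exact norm_nonneg _⟩ ⟨_, U.smul_mem _ hw, hunit, rfl⟩
  rwa [map_smul, norm_smul, norm_inv, norm_norm, ← div_eq_inv_mul, le_div_iff₀ hw0] at hle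

lemma finrank_map_eq_of_mul_norm_le {E F : Type*} [NormedAddCommGroup E] [NormedSpace ℝ E]
    [SeminormedAddCommGroup F] [NormedSpace ℝ F] (f : E →ₗ[ℝ] F) {U : Submodule ℝ E} {c : ℝ}
    (hc : 0 < c) (h : ∀ w ∈ U, c * ‖w‖ ≤ ‖f w‖) : finrank ℝ (U.map f) = finrank ℝ U := by
  rw [← LinearMap.range_domRestrict]
  refine LinearMap.finrank_range_of_inj (LinearMap.ker_eq_bot.mp ?_)
  refine LinearMap.ker_eq_bot'.mpr fun w hw => ?_
  have hle := h w w.2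
  rw [← LinearMap.domRestrict_apply, hw, norm_zero] at hle
  exact Submodule.coe_eq_zero.mp (norm_le_zero_iff.mp (nonpos_of_mul_nonpos_right hle hc))

lemma colSpace_mul {m n k : ℕ} (P : Matrix (Fin m) (Fin n) ℝ) (Q : Matrix (Fin n) (Fin k) ℝ) :
    colSpace (P * Q) = (colSpace Q).map (toEuclideanLin P) := by
  rw [colSpace, colSpace, toLpLin_mul_same, LinearMap.range_comp]

lemma finrank_colSpace {m n : ℕ} (P : Matrix (Fin m) (Fin n) ℝ) :
    finrank ℝ (colSpace P) = P.rank :=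
  (P.rank_eq_finrank_range_toLin (PiLp.basisFun 2 ℝ (Fin m)) (PiLp.basisFun 2 ℝ (Fin n))).symm

lemma sval_nonneg {m n : ℕ} (k : ℕ) (A : Matrix (Fin m) (Fin n) ℝ) : 0 ≤ sval k A := by
  by_cases hk : ∃ V : Submodule ℝ (EuclideanSpace ℝ (Fin n)), finrank ℝ V = k
  · obtain ⟨V, hV⟩ := hk
    exact Real.sSup_nonneg' ⟨0, ⟨V, hV, fun v _ => by simp⟩, le_rfl⟩
  · have hempty : {c : ℝ | ∃ V : Submodule ℝ (EuclideanSpace ℝ (Fin n)), finrank ℝ V = k ∧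
        ∀ v ∈ V, c * ‖v‖ ≤ ‖toEuclideanLin A v‖} = ∅ :=
      Set.eq_empty_of_forall_notMem fun _ ⟨V, hV, _⟩ => hk ⟨V, hV⟩
    rw [sval, hempty, Real.sSup_empty]

lemma sval_zero {m n : ℕ} (A : Matrix (Fin m) (Fin n) ℝ) : sval 0 A = 0 := by
  refine Real.sSup_of_not_bddAbove fun ⟨b, hb⟩ => (lt_add_one b).not_ge (hb ?_)
  exact ⟨⊥, finrank_bot ℝ _, fun v hv => by simp [(Submodule.mem_bot ℝ).mp hv]⟩

lemma le_sval {m n k : ℕ} (hk : 0 < k) {A : Matrix (Fin m) (Fin n) ℝ}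
    {V : Submodule ℝ (EuclideanSpace ℝ (Fin n))} (hV : finrank ℝ V = k) {c : ℝ}
    (h : ∀ v ∈ V, c * ‖v‖ ≤ ‖toEuclideanLin A v‖) : c ≤ sval k A := by
  refine le_csSup ⟨‖(toEuclideanLin A).toContinuousLinearMap‖, ?_⟩ ⟨V, hV, h⟩
  rintro c ⟨W, hW, hc⟩
  obtain ⟨w, hwW, hw⟩ := Submodule.exists_mem_ne_zero_of_ne_bot (p := W) <| by
    rintro rfl
    rw [finrank_bot] at hW
    omega
  exact le_of_mul_le_mul_right ((hc w hwW).trans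
    ((toEuclideanLin A).toContinuousLinearMap.le_opNorm w)) (norm_pos_iff.mpr hw)

lemma sval_mul_norm_le {m k : ℕ} (A : Matrix (Fin m) (Fin k) ℝ) (v : EuclideanSpace ℝ (Fin k)) :
    sval k A * ‖v‖ ≤ ‖toEuclideanLin A v‖ := by
  rcases eq_or_ne v 0 with rfl | hv
  · simp
  have hv := norm_pos_iff.mpr hv
  rw [← le_div_iff₀ hv]
  refine Real.sSup_le ?_ (by positivity)
  rintro c ⟨V, hV, hc⟩
  have hVtop : V = ⊤ :=
    Submodule.eq_top_of_finrank_eq (by rw [hV, finrank_euclideanSpace_fin])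
  exact (le_div_iff₀ hv).mpr (hc v (hVtop ▸ Submodule.mem_top))

lemma mul_norm_le_norm_transpose_apply_of_mem_colSpace {n k : ℕ} {B : Matrix (Fin n) (Fin k) ℝ}
    {c : ℝ} (hB : ∀ u, c * ‖u‖ ≤ ‖toEuclideanLin B u‖) {w : EuclideanSpace ℝ (Fin n)}
    (hw : w ∈ colSpace B) : c * ‖w‖ ≤ ‖toEuclideanLin Bᵀ w‖ := by
  obtain ⟨u, rfl⟩ := hw
  rcases eq_or_ne u 0 with rfl | hu
  · simp
  set w := toEuclideanLin B u
  have hinner : ‖w‖ ^ 2 = inner ℝ (toEuclideanLin Bᵀ w) u := by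
    rw [← conjTranspose_eq_transpose_of_trivial, toEuclideanLin_conjTranspose_eq_adjoint,
      LinearMap.adjoint_inner_left, real_inner_self_eq_norm_sq]
  refine le_of_mul_le_mul_right ?_ (norm_pos_iff.mpr hu)
  calc c * ‖w‖ * ‖u‖ = c * ‖u‖ * ‖w‖ := by ring
    _ ≤ ‖w‖ * ‖w‖ := mul_le_mul_of_nonneg_right (hB u) (norm_nonneg _)
    _ = inner ℝ (toEuclideanLin Bᵀ w) u := by rw [← sq, hinner]
    _ ≤ ‖toEuclideanLin Bᵀ w‖ * ‖u‖ := real_inner_le_norm _ _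

lemma sval_mul_le_sval_mul_transpose {m n k : ℕ} (A : Matrix (Fin m) (Fin k) ℝ)
    {B : Matrix (Fin n) (Fin k) ℝ} (hB : finrank ℝ (colSpace B) = k) {c : ℝ}
    (hc : ∀ u, c * ‖u‖ ≤ ‖toEuclideanLin B u‖) : sval k A * c ≤ sval k (A * Bᵀ) := by
  rcases k.eq_zero_or_pos with rfl | hk
  · simp [sval_zero]
  refine le_sval hk hB fun w hw => ?_
  calc sval k A * c * ‖w‖ = sval k A * (c * ‖w‖) := mul_assoc ..
    _ ≤ sval k A * ‖toEuclideanLin Bᵀ w‖ := mul_le_mul_of_nonneg_left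
        (mul_norm_le_norm_transpose_apply_of_mem_colSpace hc hw) (sval_nonneg k A)
    _ ≤ ‖toEuclideanLin A (toEuclideanLin Bᵀ w)‖ := sval_mul_norm_le A _
    _ = ‖toEuclideanLin (A * Bᵀ) w‖ := by rw [toLpLin_mul_same]; rfl

theorem delta_min_lower_bound_general (D H r : ℕ)
    (A : Matrix (Fin D) (Fin r) ℝ) (G : Matrix (Fin H) (Fin r) ℝ)
    (S : Matrix (Fin H) (Fin H) ℝ)
    (hG : G.rank = r)
    (M : Matrix (Fin D) (Fin H) ℝ) (hM : M = A * Gᵀ)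
    (κ : ℝ)
    (hκdef : κ = sInf {t : ℝ | ∃ v ∈ colSpace G, ‖v‖ = 1 ∧
      t = ‖Matrix.toEuclideanLin S v‖})
    (hκ : 0 < κ)
    (δ δ' δmin : ℝ)
    (hδ : δ = sval r M) (hδ' : δ' = sval r (M * Sᵀ))
    (hδmin : δmin = min δ δ') :
    min 1 κ * (sval r A * sval r G) ≤ δmin := by
  have hS : ∀ w ∈ colSpace G, κ * ‖w‖ ≤ ‖toEuclideanLin S w‖ :=
    fun w hw => hκdef ▸ sInf_unit_mul_norm_le _ _ hw
  have hG_col : finrank ℝ (colSpace G) = r := by rw [finrank_colSpace, hG]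
  have hSG_col : finrank ℝ (colSpace (S * G)) = r := by
    rw [colSpace_mul, finrank_map_eq_of_mul_norm_le _ hκ hS, hG_col]
  have hSG (u) : κ * sval r G * ‖u‖ ≤ ‖toEuclideanLin (S * G) u‖ :=
    calc κ * sval r G * ‖u‖ = κ * (sval r G * ‖u‖) := mul_assoc ..
      _ ≤ κ * ‖toEuclideanLin G u‖ := mul_le_mul_of_nonneg_left (sval_mul_norm_le G u) hκ.le
      _ ≤ ‖toEuclideanLin S (toEuclideanLin G u)‖ := hS _ ⟨u, rfl⟩
      _ = ‖toEuclideanLin (S * G) u‖ := by rw [toLpLin_mul_same]; rfl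
  have hδ_ge : sval r A * sval r G ≤ δ :=
    hδ ▸ hM ▸ sval_mul_le_sval_mul_transpose A hG_col (sval_mul_norm_le G)
  have hδ'_ge : sval r A * (κ * sval r G) ≤ δ' := by
    rw [hδ', hM, Matrix.mul_assoc, ← transpose_mul]
    exact sval_mul_le_sval_mul_transpose A hSG_col hSG
  have hAG := mul_nonneg (sval_nonneg r A) (sval_nonneg r G)
  rw [hδmin]
  refine le_min ?_ ?_
  · calc min 1 κ * (sval r A * sval r G) ≤ 1 * (sval r A * sval r G) :=
          mul_le_mul_of_nonneg_right (min_le_left _ _) hAG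
      _ ≤ δ := by rwa [one_mul]
  · calc min 1 κ * (sval r A * sval r G) ≤ κ * (sval r A * sval r G) :=
          mul_le_mul_of_nonneg_right (min_le_right _ _) hAG
      _ ≤ δ' := by rwa [mul_left_comm]

theorem delta_min_lower_bound (D H r : ℕ)
    (A : Matrix (Fin D) (Fin r) ℝ) (G : Matrix (Fin H) (Fin r) ℝ)
    (S : Matrix (Fin H) (Fin H) ℝ)
    (hA : A.rank = r) (hG : G.rank = r)
    (M : Matrix (Fin D) (Fin H) ℝ) (hM : M = A * Gᵀ)
    (κ : ℝ)
    (hκdef : κ = sInf {t : ℝ | ∃ v ∈ colSpace G, ‖v‖ = 1 ∧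
      t = ‖Matrix.toEuclideanLin S v‖})
    (hκ : 0 < κ)
    (δ δ' δmin : ℝ)
    (hδ : δ = sval r M) (hδ' : δ' = sval r (M * Sᵀ))
    (hδmin : δmin = min δ δ') :
    min 1 κ * (sval r A * sval r G) ≤ δmin :=
  delta_min_lower_bound_general D H r A G S hG M hM κ hκdef hκ δ δ' δmin hδ hδ' hδmin
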